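/- Let p be a prime number and let a, b, c be integers with |a| > 1 and |b| = p. Suppose there exist integers r1 and r2 with a*x^2 + b*x + c = a*(x - r1)*(x - r2) identically in x. Then |a| = p (i.e., a = p or a = -p), and there exists an odd positive integer T such that 4*c = a*(1 - T^2). -/

import Mathlib

/-!
Comparing coefficients gives `b = -a (r₁ + r₂)` and `c = a r₁ r₂`, so `|a| · |r₁ + r₂| = p`.
Since `|a| > 1` and `p` is prime, `|a| = p` and `r₁ + r₂ = ±1`. Then
`4c = a ((r₁ + r₂)² - (r₁ - r₂)²) = a (1 - T²)` with `T = |r₁ - r₂|`, which is odd because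
`r₁ - r₂` has the parity of `r₁ + r₂`.
-/

theorem coeffs_eq_of_forall_eq_mul_sub_mul_sub {R : Type*} [CommRing R] {a b c r₁ r₂ : R}
    (h : ∀ x : R, a * x ^ 2 + b * x + c = a * (x - r₁) * (x - r₂)) :
    b = -(a * (r₁ + r₂)) ∧ c = a * (r₁ * r₂) :=
  ⟨by linear_combination h 1 - h 0, by linear_combination h 0⟩

theorem Int.abs_eq_prime_and_abs_eq_one_of_abs_mul {p : ℕ} (hp : p.Prime) {a s : ℤ}
    (ha : 1 < |a|) (h : |a * s| = p) : |a| = p ∧ |s| = 1 := by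
  have hnat : (a.natAbs * s.natAbs).Prime := by
    have : ((a * s).natAbs : ℤ) = p := by rw [Int.natCast_natAbs, h]
    rwa [← Int.natAbs_mul, Int.natCast_inj.mp this]
  have ha' : a.natAbs ≠ 1 := by
    intro h1
    rw [Int.abs_eq_natAbs, h1] at ha
    exact lt_irrefl _ ha
  rcases Nat.prime_mul_iff.mp hnat with ⟨-, hs⟩ | ⟨-, h1⟩
  · refine ⟨?_, by rw [Int.abs_eq_natAbs, hs, Nat.cast_one]⟩
    rw [← h, abs_mul, Int.abs_eq_natAbs s, hs, Nat.cast_one, mul_one]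
  · exact absurd h1 ha'

theorem Int.exists_odd_pos_sq_eq_sub_sq_of_odd_add {r₁ r₂ : ℤ} (h : Odd (r₁ + r₂)) :
    ∃ T : ℤ, Odd T ∧ 0 < T ∧ T ^ 2 = (r₁ - r₂) ^ 2 := by
  have hsub : Odd (r₁ - r₂) := by
    rw [show r₁ - r₂ = r₁ + r₂ - 2 * r₂ by ring]
    exact h.sub_even (even_two_mul r₂)
  have hne : r₁ - r₂ ≠ 0 := fun h0 => Int.not_even_iff_odd.mpr hsub (h0 ▸ Even.zero)
  exact ⟨|r₁ - r₂|, odd_abs.mpr hsub, abs_pos.mpr hne, sq_abs _⟩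

theorem pType1_necessary (p : ℕ) (hp : p.Prime) (a b c : ℤ)
    (ha : 1 < |a|) (hb : |b| = (p : ℤ))
    (h : ∃ r1 r2 : ℤ, ∀ x : ℤ, a * x ^ 2 + b * x + c = a * (x - r1) * (x - r2)) :
    |a| = (p : ℤ) ∧ (a = (p : ℤ) ∨ a = -(p : ℤ)) ∧
      ∃ T : ℤ, Odd T ∧ 0 < T ∧ 4 * c = a * (1 - T ^ 2) := by
  obtain ⟨r1, r2, hx⟩ := h
  obtain ⟨hb', hc⟩ := coeffs_eq_of_forall_eq_mul_sub_mul_sub hx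
  obtain ⟨hap, hs⟩ : |a| = p ∧ |r1 + r2| = 1 :=
    Int.abs_eq_prime_and_abs_eq_one_of_abs_mul hp ha (by rw [← abs_neg, ← hb', hb])
  have hs2 : (r1 + r2) ^ 2 = 1 := by rw [← sq_abs, hs, one_pow]
  have hsodd : Odd (r1 + r2) := odd_abs.mp (hs ▸ odd_one)
  obtain ⟨T, hTodd, hTpos, hT⟩ := Int.exists_odd_pos_sq_eq_sub_sq_of_odd_add hsodd
  refine ⟨hap, abs_eq (Nat.cast_nonneg p) |>.mp hap, T, hTodd, hTpos, ?_⟩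
  linear_combination 4 * hc + a * hs2 + a * hT
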